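/- arXiv:2605.29477 — 2 statements merged into one kernel-verified Lean document; each statement's English description precedes it below -/
import Mathlib

section
/- Let (X_t)_{t∈ℕ} be an integrable random process over ℝ_{≥0}, adapted to a filtration (𝓕_t)_{t∈ℕ}. Let x_min > 0 and T = inf{t ∈ ℕ : X_t < x_min}. Let t' ∈ ℕ ∪ {∞}, and let (A_s)_{s∈[0..t']} be a collection of events. Assume there is δ ∈ (0,1) such that for all t ∈ [0..t'], E[(X_t − X_{t+1})·1{t < T and ∩_{s∈[0..t']} A_s} | 𝓕_t] ≥ δ·X_t·1{t < T}·P(∩_{s∈[0..t']} A_s | 𝓕_t). Then for all t ∈ [0..t']: P(T > t) ≤ P(X_t·1{t < T} ≥ x_min and ∪_{s∈[0..t']} A_s^c) + (1−δ)^t · E[X_0·1{T > 0 and ∩_{s∈[0..t']} A_s}] / x_min ≤ P(∪_{s∈[0..t']} A_s^c) + (1−δ)^t · E[X_0·1{T > 0}] / x_min. -/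
/-!
On the event `{t < T} ∩ ⋂ A_s` the drift condition, integrated after pulling the
`𝓕_t`-measurable factor `δ X_t 1{t < T}` out of the conditional expectation, gives
`E[X_{t+1} 1{t < T, ⋂ A_s}] ≤ (1 - δ) E[X_t 1{t < T, ⋂ A_s}]`; as `X ≥ 0` and `{t + 1 < T} ⊆ {t < T}`,
the quantity `I_t = E[X_t 1{t < T, ⋂ A_s}]` decays like `(1 - δ)^t I_0`. Since `X_t ≥ x_min` on
`{t < T}`, Markov's inequality bounds `P(t < T, ⋂ A_s)` by `I_t / x_min`, and the remaining part of
`{t < T}` lies in `{X_t 1{t < T} ≥ x_min} ∩ ⋃ A_sᶜ`.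
-/

open MeasureTheory

lemma mul_indicator_one_apply {α M : Type*} [MulZeroOneClass M] (f : α → M) (s : Set α) (a : α) :
    f a * s.indicator (fun _ => 1) a = s.indicator f a := by
  simpa using (Set.indicator_mul_right s f (fun _ => (1 : M)) (i := a)).symm

lemma ENat.coe_lt_sInf_iff_forall_not {P : ℕ → Prop} {t : ℕ} :
    (t : ℕ∞) < sInf {s : ℕ∞ | ∃ k : ℕ, s = k ∧ P k} ↔ ∀ k ≤ t, ¬ P k := by
  rw [← ENat.natCast_add_one_le_iff, le_sInf_iff]
  constructor
  · rintro h k hkt hk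
    have := h k ⟨k, rfl, hk⟩
    norm_cast at this
    omega
  · rintro h _ ⟨k, rfl, hk⟩
    have : t < k := by_contra fun hkt => h k (not_lt.1 hkt) hk
    exact_mod_cast this

section

variable {Ω : Type*} {m₀ m : MeasurableSpace Ω} {μ : Measure Ω} [IsFiniteMeasure μ]

theorem integral_indicator_le_of_condExp_drift (hm : m₀ ≤ m)
    {Y Y' : Ω → ℝ} {S A : Set Ω} {δ : ℝ}
    (hY : Measurable[m₀] Y) (hY_int : Integrable Y μ) (hY'_int : Integrable Y' μ)
    (hS : MeasurableSet[m₀] S) (hA : MeasurableSet A)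
    (hdrift : ∀ᵐ ω ∂μ, δ * Y ω * S.indicator (fun _ => (1 : ℝ)) ω *
        μ[A.indicator (fun _ => (1 : ℝ)) | m₀] ω ≤
      μ[fun ω => (Y ω - Y' ω) * (S ∩ A).indicator (fun _ => (1 : ℝ)) ω | m₀] ω) :
    ∫ ω, (S ∩ A).indicator Y' ω ∂μ ≤ (1 - δ) * ∫ ω, (S ∩ A).indicator Y ω ∂μ := by
  have hSA : MeasurableSet (S ∩ A) := (hm _ hS).inter hA
  set f : Ω → ℝ := fun ω => δ * Y ω * S.indicator (fun _ => 1) ω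
  have hf : StronglyMeasurable[m₀] f :=
    (hY.stronglyMeasurable.const_mul δ).mul (stronglyMeasurable_const.indicator hS)
  have hfA : f * A.indicator (fun _ => 1) = fun ω => δ * (S ∩ A).indicator Y ω := by
    funext ω
    by_cases hωS : ω ∈ S <;> by_cases hωA : ω ∈ A <;> simp [f, hωS, hωA]
  have hpull : μ[f * A.indicator (fun _ => 1) | m₀] =ᵐ[μ] f * μ[A.indicator (fun _ => 1) | m₀] :=
    condExp_mul_of_stronglyMeasurable_left hf
      (hfA ▸ ((hY_int.indicator hSA).const_mul δ)) ((integrable_const 1).indicator hA)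
  have hlower : ∫ ω, (f * μ[A.indicator (fun _ => (1 : ℝ)) | m₀]) ω ∂μ =
      δ * ∫ ω, (S ∩ A).indicator Y ω ∂μ := by
    rw [← integral_congr_ae hpull, integral_condExp hm, hfA, integral_const_mul]
  have hupper : ∫ ω, μ[fun ω => (Y ω - Y' ω) * (S ∩ A).indicator (fun _ => 1) ω | m₀] ω ∂μ =
      ∫ ω, (S ∩ A).indicator Y ω ∂μ - ∫ ω, (S ∩ A).indicator Y' ω ∂μ := by
    rw [integral_condExp hm]
    simp_rw [mul_indicator_one_apply (fun ω => Y ω - Y' ω), Set.indicator_sub]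
    exact integral_sub (hY_int.indicator hSA) (hY'_int.indicator hSA)
  have hmono := integral_mono_ae (integrable_condExp.congr hpull) integrable_condExp hdrift
  rw [hlower, hupper] at hmono
  linarith

theorem integral_indicator_le_geom_of_drift {ℱ : Filtration ℕ m} {X : ℕ → Ω → ℝ}
    (hX_int : ∀ t, Integrable (X t) μ) (hX_adapted : Adapted ℱ X) (hX_nonneg : ∀ t ω, 0 ≤ X t ω)
    {S : ℕ → Set Ω} (hS : ∀ t, MeasurableSet[ℱ t] (S t)) (hS_anti : Antitone S)
    {A : Set Ω} (hA : MeasurableSet A) {δ : ℝ} (hδ : δ ≤ 1) {n : ℕ}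
    (hdrift : ∀ t < n, ∀ᵐ ω ∂μ, δ * X t ω * (S t).indicator (fun _ => (1 : ℝ)) ω *
        μ[A.indicator (fun _ => (1 : ℝ)) | ℱ t] ω ≤
      μ[fun ω => (X t ω - X (t + 1) ω) * (S t ∩ A).indicator (fun _ => (1 : ℝ)) ω | ℱ t] ω) :
    ∫ ω, (S n ∩ A).indicator (X n) ω ∂μ ≤ (1 - δ) ^ n * ∫ ω, (S 0 ∩ A).indicator (X 0) ω ∂μ := by
  refine le_geom (sub_nonneg.2 hδ) n fun t ht => le_trans ?_
    (integral_indicator_le_of_condExp_drift (ℱ.le t) (hX_adapted t) (hX_int t) (hX_int (t + 1))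
      (hS t) hA (hdrift t ht))
  refine integral_mono ((hX_int _).indicator ((ℱ.le _ _ (hS _)).inter hA))
    ((hX_int _).indicator ((ℱ.le _ _ (hS _)).inter hA)) ?_
  exact Set.indicator_le_indicator_of_subset
    (Set.inter_subset_inter_left _ (hS_anti t.le_succ)) (hX_nonneg _)

theorem measureReal_le_add_of_integral_indicator_le {S A : Set Ω} {Y : Ω → ℝ} {c a : ℝ}
    (hc : 0 < c) (hS : MeasurableSet S) (hA : MeasurableSet A) (hY_int : Integrable Y μ)
    (hY : ∀ ω ∈ S, c ≤ Y ω) (h : ∫ ω, (S ∩ A).indicator Y ω ∂μ ≤ a) :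
    μ.real S ≤ μ.real ({ω | c ≤ S.indicator Y ω} ∩ Aᶜ) + a / c := by
  have hmarkov : c * μ.real (S ∩ A) ≤ ∫ ω, (S ∩ A).indicator Y ω ∂μ := by
    rw [integral_indicator (hS.inter hA)]
    exact setIntegral_ge_of_const_le_real (hS.inter hA) (measure_ne_top _ _)
      (fun ω hω => hY ω hω.1) hY_int.integrableOn
  have hsub : S \ A ⊆ {ω | c ≤ S.indicator Y ω} ∩ Aᶜ := fun ω ⟨hωS, hωA⟩ =>
    ⟨show c ≤ S.indicator Y ω by rw [Set.indicator_of_mem hωS]; exact hY ω hωS, hωA⟩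
  rw [← measureReal_inter_add_sdiff (s := S) hA, add_comm]
  refine add_le_add (measureReal_mono hsub) ?_
  rw [le_div_iff₀ hc, mul_comm]
  exact hmarkov.trans h

end

lemma MeasureTheory.Adapted.measurableSet_coe_lt_sInf_lt {Ω : Type*} {m : MeasurableSpace Ω} {ℱ : Filtration ℕ m}
    {X : ℕ → Ω → ℝ} (hX : Adapted ℱ X) (c : ℝ) (t : ℕ) :
    MeasurableSet[ℱ t] {ω | (t : ℕ∞) < sInf {s : ℕ∞ | ∃ k : ℕ, s = k ∧ X k ω < c}} := by
  have : {ω | (t : ℕ∞) < sInf {s : ℕ∞ | ∃ k : ℕ, s = k ∧ X k ω < c}} =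
      ⋂ k ∈ Set.Iic t, {ω | c ≤ X k ω} := by
    ext ω
    simp [ENat.coe_lt_sInf_iff_forall_not]
  rw [this]
  exact .biInter (Set.to_countable _) fun k hk =>
    ℱ.mono hk _ (measurableSet_le measurable_const (hX k))

/-- multiplicative drift with failure events, main inequalities.
Let `(X_t)` be an integrable, nonnegative process adapted to `(𝓕_t)`, `x_min > 0`,
`T = inf{t : X_t < x_min}`, `t' ∈ ℕ ∪ {∞}`, `(A_s)_{s ∈ [0..t']}` events, and
`δ ∈ (0,1)` such that for all `t ∈ [0..t']`,
`E[(X_t − X_{t+1})·1{t < T ∧ ∩ A_s} | 𝓕_t] ≥ δ·X_t·1{t < T}·P(∩ A_s | 𝓕_t)`.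
Then for all `t ∈ [0..t']`,
`P(T > t) ≤ P(X_t·1{t<T} ≥ x_min ∧ ∪ A_sᶜ) + (1−δ)^t·E[X_0·1{T>0 ∧ ∩ A_s}]/x_min`
`        ≤ P(∪ A_sᶜ) + (1−δ)^t·E[X_0·1{T>0}]/x_min`. -/
theorem stmt_0 {Ω : Type*} {m : MeasurableSpace Ω} (μ : Measure Ω) [IsProbabilityMeasure μ]
    (ℱ : Filtration ℕ m) (X : ℕ → Ω → ℝ)
    (hX_int : ∀ t, Integrable (X t) μ)
    (hX_adapted : Adapted ℱ X)
    (hX_nonneg : ∀ t ω, 0 ≤ X t ω)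
    (xmin : ℝ) (hxmin : 0 < xmin)
    (T : Ω → ℕ∞)
    (hT : ∀ ω, T ω = sInf {s : ℕ∞ | ∃ k : ℕ, s = (k : ℕ∞) ∧ X k ω < xmin})
    (t' : ℕ∞) (A : ℕ → Set Ω) (hA : ∀ s, MeasurableSet (A s))
    (Aall : Set Ω) (hAall : Aall = ⋂ s ∈ {s : ℕ | (s : ℕ∞) ≤ t'}, A s)
    (δ : ℝ) (hδ : δ ∈ Set.Ioo (0 : ℝ) 1)
    (hdrift : ∀ t : ℕ, (t : ℕ∞) ≤ t' →
      ∀ᵐ ω ∂μ,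
        δ * X t ω * Set.indicator {ω' | (t : ℕ∞) < T ω'} (fun _ => (1 : ℝ)) ω *
            (μ[Set.indicator Aall (fun _ => (1 : ℝ)) | ℱ t]) ω ≤
          (μ[fun ω' => (X t ω' - X (t + 1) ω') *
              Set.indicator ({ω'' | (t : ℕ∞) < T ω''} ∩ Aall) (fun _ => (1 : ℝ)) ω'
            | ℱ t]) ω) :
    ∀ t : ℕ, (t : ℕ∞) ≤ t' →
      (μ {ω | (t : ℕ∞) < T ω}).toReal ≤
          (μ ({ω | xmin ≤ X t ω *
                Set.indicator {ω' | (t : ℕ∞) < T ω'} (fun _ => (1 : ℝ)) ω} ∩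
              ⋃ s ∈ {s : ℕ | (s : ℕ∞) ≤ t'}, (A s)ᶜ)).toReal +
            (1 - δ) ^ t *
              (∫ ω, X 0 ω * Set.indicator ({ω' | 0 < T ω'} ∩ Aall) (fun _ => (1 : ℝ)) ω ∂μ) /
              xmin ∧
        (μ ({ω | xmin ≤ X t ω *
              Set.indicator {ω' | (t : ℕ∞) < T ω'} (fun _ => (1 : ℝ)) ω} ∩
            ⋃ s ∈ {s : ℕ | (s : ℕ∞) ≤ t'}, (A s)ᶜ)).toReal +
          (1 - δ) ^ t *
            (∫ ω, X 0 ω * Set.indicator ({ω' | 0 < T ω'} ∩ Aall) (fun _ => (1 : ℝ)) ω ∂μ) /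
            xmin ≤
        (μ (⋃ s ∈ {s : ℕ | (s : ℕ∞) ≤ t'}, (A s)ᶜ)).toReal +
          (1 - δ) ^ t *
            (∫ ω, X 0 ω * Set.indicator {ω' | 0 < T ω'} (fun _ => (1 : ℝ)) ω ∂μ) / xmin := by
  obtain ⟨-, hδ1⟩ := hδ
  intro t ht
  set S : ℕ → Set Ω := fun t => {ω | (t : ℕ∞) < T ω}
  have hS_meas : ∀ t, MeasurableSet[ℱ t] (S t) := by
    simpa only [S, hT] using Adapted.measurableSet_coe_lt_sInf_lt hX_adapted xmin
  have hS_le : ∀ ω ∈ S t, xmin ≤ X t ω := fun ω (hω : (t : ℕ∞) < T ω) =>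
    not_lt.1 (ENat.coe_lt_sInf_iff_forall_not.1 (hT ω ▸ hω) t le_rfl)
  have hS_anti : Antitone S := fun a b hab _ (hω : (b : ℕ∞) < _) =>
    show (a : ℕ∞) < _ from (Nat.cast_le.2 hab).trans_lt hω
  have hS_zero : {ω | 0 < T ω} = S 0 := by simp [S]
  have hAall_meas : MeasurableSet Aall := hAall ▸ .biInter (Set.to_countable _) fun s _ => hA s
  have hAall_compl : Aallᶜ = ⋃ s ∈ {s : ℕ | (s : ℕ∞) ≤ t'}, (A s)ᶜ := by simp [hAall]
  have hdecay := integral_indicator_le_geom_of_drift hX_int hX_adapted hX_nonneg hS_meas hS_anti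
    hAall_meas hδ1.le (n := t) fun k hk => hdrift k (le_trans (by exact_mod_cast hk.le) ht)
  simp only [mul_indicator_one_apply, ← hAall_compl, hS_zero]
  refine ⟨measureReal_le_add_of_integral_indicator_le hxmin (ℱ.le t _ (hS_meas t)) hAall_meas
    (hX_int t) hS_le hdecay, ?_⟩
  have hI : ∫ ω, (S 0 ∩ Aall).indicator (X 0) ω ∂μ ≤ ∫ ω, (S 0).indicator (X 0) ω ∂μ :=
    integral_mono ((hX_int 0).indicator ((ℱ.le 0 _ (hS_meas 0)).inter hAall_meas))
      ((hX_int 0).indicator (ℱ.le 0 _ (hS_meas 0)))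
      (Set.indicator_le_indicator_of_subset Set.inter_subset_left (hX_nonneg 0))
  exact add_le_add (measureReal_mono Set.inter_subset_right) <| div_le_div_of_nonneg_right
    (mul_le_mul_of_nonneg_left hI (pow_nonneg (sub_nonneg.2 hδ1.le) t)) hxmin.le
end

section
/- Let ρ ∈ ℕ, m ∈ ℕ_{≥1}, ρ⁺ = max{1, ρ}, and let q : [1..mρ⁺] → ℝ_{≥0} be arbitrary. Let M ∈ ℝ_{≥0} be such that ∑_{i∈[1..mρ⁺]} q(i) = M. Then ∑_{d=0}^{ρ} ∑_{i=1}^{mρ⁺−d} q(i)·q(i+d) ≥ M²/(2m). -/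
/-!
Cut `[1..mρ⁺]` into `m` consecutive blocks of length `ρ⁺ ≤ ρ + 1`. If `S_b` is the sum of `q` over
block `b`, Cauchy–Schwarz gives `M² ≤ m ∑_b S_b²`, and `S_b² ≤ 2 ∑ q i * q j` over the pairs
`i ≤ j` of block `b`. Two indices of one block differ by at most `ρ`, so each such pair is a term
`q i * q (i + d)` of the double sum, and distinct blocks contribute distinct terms.
-/

open Finset

theorem sq_sum_le_two_mul_sum_sum_le {ι R : Type*} [LinearOrder ι] [CommRing R] [LinearOrder R]
    [IsStrictOrderedRing R] (s : Finset ι) (f : ι → R) :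
    (∑ i ∈ s, f i) ^ 2 ≤ 2 * ∑ i ∈ s, ∑ j ∈ s with i ≤ j, f i * f j := by
  induction s using Finset.induction_on_max with
  | empty => simp
  | insert a s hlt ih =>
    have ha : a ∉ s := fun h => lt_irrefl a (hlt a h)
    have top : ∑ j ∈ insert a s with a ≤ j, f a * f j = f a * f a := by
      rw [filter_insert, if_pos le_rfl, filter_false_of_mem fun j hj => not_le.2 (hlt j hj)]
      simp
    have below : ∀ i ∈ s, ∑ j ∈ insert a s with i ≤ j, f i * f j
        = f i * f a + ∑ j ∈ s with i ≤ j, f i * f j := by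
      intro i hi
      rw [filter_insert, if_pos (hlt i hi).le, sum_insert (by simp [ha])]
    rw [sum_insert ha, sum_insert ha, top, sum_congr rfl below, sum_add_distrib, ← sum_mul]
    nlinarith [sq_nonneg (f a)]

theorem sum_Ioc_mul_eq_sum_range_sum_Ioc {M : Type*} [AddCommMonoid M] (f : ℕ → M) (m r : ℕ) :
    ∑ i ∈ Ioc 0 (m * r), f i = ∑ b ∈ range m, ∑ i ∈ Ioc (b * r) (b * r + r), f i := by
  induction m with
  | zero => simp
  | succ n ih =>
    rw [sum_range_succ, ← ih, Nat.succ_mul]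
    exact (sum_Ioc_consecutive f (Nat.zero_le _) (Nat.le_add_right _ _)).symm

theorem sum_Ioc_sum_filter_le_eq_sum_Icc_sum_Ioc {M : Type*} [AddCommMonoid M]
    (f : ℕ → ℕ → M) {ρ r : ℕ} (hr : r ≤ ρ + 1) (c : ℕ) :
    ∑ i ∈ Ioc c (c + r), ∑ j ∈ Ioc c (c + r) with i ≤ j, f i j
      = ∑ d ∈ Icc 0 ρ, ∑ i ∈ Ioc c (c + (r - d)), f i (i + d) := by
  rw [sum_sigma', sum_sigma']
  refine sum_nbij' (fun p => ⟨p.2 - p.1, p.1⟩) (fun p => ⟨p.2, p.2 + p.1⟩) ?_ ?_ ?_ ?_ ?_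
  all_goals
    rintro ⟨a, b⟩ hab
    simp only [mem_sigma, mem_filter, mem_Icc, mem_Ioc] at hab ⊢
  · omega
  · omega
  · rw [Nat.add_sub_cancel' hab.2.2]
  · simp
  · rw [Nat.add_sub_cancel' hab.2.2]

theorem sum_range_sum_Ioc_sub_le_sum_Ioc {R : Type*} [AddCommMonoid R] [PartialOrder R]
    [IsOrderedAddMonoid R] (h : ℕ → R) (m r d : ℕ) (hh : ∀ i ∈ Ioc 0 (m * r - d), 0 ≤ h i) :
    ∑ b ∈ range m, ∑ i ∈ Ioc (b * r) (b * r + (r - d)), h i ≤ ∑ i ∈ Ioc 0 (m * r - d), h i := by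
  calc ∑ b ∈ range m, ∑ i ∈ Ioc (b * r) (b * r + (r - d)), h i
      ≤ ∑ b ∈ range m, ∑ i ∈ Ioc (b * r) (b * r + r) with i ≤ m * r - d, h i := by
        refine sum_le_sum fun b hb => sum_le_sum_of_subset_of_nonneg ?_ fun i hi _ => hh i ?_
        · have : (b + 1) * r ≤ m * r := Nat.mul_le_mul_right r (mem_range.1 hb)
          intro i hi
          simp only [mem_filter, mem_Ioc, Nat.succ_mul] at hi this ⊢
          omega
        · simp only [mem_filter, mem_Ioc] at hi ⊢
          omega
    _ = ∑ i ∈ Ioc 0 (m * r - d), h i := by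
        simp only [sum_filter]
        rw [← sum_Ioc_mul_eq_sum_range_sum_Ioc, ← sum_filter]
        congr 1
        ext i
        simp only [mem_filter, mem_Ioc]
        omega

theorem sum_range_sq_sum_Ioc_le {ρ r : ℕ} (hr : r ≤ ρ + 1) (m : ℕ) (q : ℕ → ℝ)
    (hq : ∀ i ∈ Ioc 0 (m * r), 0 ≤ q i) :
    ∑ b ∈ range m, (∑ i ∈ Ioc (b * r) (b * r + r), q i) ^ 2
      ≤ 2 * ∑ d ∈ Icc 0 ρ, ∑ i ∈ Ioc 0 (m * r - d), q i * q (i + d) := by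
  calc ∑ b ∈ range m, (∑ i ∈ Ioc (b * r) (b * r + r), q i) ^ 2
      ≤ ∑ b ∈ range m, 2 * ∑ i ∈ Ioc (b * r) (b * r + r),
          ∑ j ∈ Ioc (b * r) (b * r + r) with i ≤ j, q i * q j :=
        sum_le_sum fun b _ => sq_sum_le_two_mul_sum_sum_le _ q
    _ = 2 * ∑ d ∈ Icc 0 ρ, ∑ b ∈ range m,
          ∑ i ∈ Ioc (b * r) (b * r + (r - d)), q i * q (i + d) := by
        rw [← mul_sum, sum_comm]
        simp only [sum_Ioc_sum_filter_le_eq_sum_Icc_sum_Ioc (fun i j => q i * q j) hr]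
    _ ≤ 2 * ∑ d ∈ Icc 0 ρ, ∑ i ∈ Ioc 0 (m * r - d), q i * q (i + d) := by
        gcongr with d
        refine sum_range_sum_Ioc_sub_le_sum_Ioc _ m r d fun i hi => ?_
        simp only [mem_Ioc] at hi
        exact mul_nonneg (hq i (by simp only [mem_Ioc]; omega))
          (hq _ (by simp only [mem_Ioc]; omega))

theorem stmt_2_general (ρ m : ℕ) (q : ℕ → ℝ)
    (hq : ∀ i ∈ Finset.Icc 1 (m * max 1 ρ), 0 ≤ q i)
    (M : ℝ)
    (hsum : ∑ i ∈ Finset.Icc 1 (m * max 1 ρ), q i = M) :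
    M ^ 2 / (2 * m) ≤
      ∑ d ∈ Finset.Icc 0 ρ, ∑ i ∈ Finset.Icc 1 (m * max 1 ρ - d), q i * q (i + d) := by
  have hIoc (n : ℕ) : Icc 1 n = Ioc 0 n := Icc_add_one_left_eq_Ioc 0 n
  simp only [hIoc] at hq hsum ⊢
  subst hsum
  set r := max 1 ρ
  have hband := sum_range_sq_sum_Ioc_le (show r ≤ ρ + 1 by omega) m q hq
  have hCS := sq_sum_le_card_mul_sum_sq (s := range m)
    (f := fun b => ∑ i ∈ Ioc (b * r) (b * r + r), q i)
  rw [card_range, ← sum_Ioc_mul_eq_sum_range_sum_Ioc] at hCS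
  have hband_nonneg : 0 ≤ ∑ d ∈ Icc 0 ρ, ∑ i ∈ Ioc 0 (m * r - d), q i * q (i + d) := by
    linarith [(sum_nonneg fun b _ => sq_nonneg _).trans hband]
  refine div_le_of_le_mul₀ (by positivity) hband_nonneg ?_
  calc _ ≤ _ := hCS
    _ ≤ (m : ℝ) * (2 * ∑ d ∈ Icc 0 ρ, ∑ i ∈ Ioc 0 (m * r - d), q i * q (i + d)) := by gcongr
    _ = _ := by ring

/-- Let `ρ ∈ ℕ`, `m ∈ ℕ_{≥1}`, `ρ⁺ = max 1 ρ`, and let `q : [1..mρ⁺] → ℝ_{≥0}` be arbitrary.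
Let `M ∈ ℝ_{≥0}` be such that `∑_{i ∈ [1..mρ⁺]} q i = M`. Then
`∑_{d=0}^{ρ} ∑_{i=1}^{mρ⁺−d} q i * q (i+d) ≥ M² / (2m)`. -/
theorem stmt_2 (ρ m : ℕ) (hm : 1 ≤ m) (q : ℕ → ℝ)
    (hq : ∀ i ∈ Finset.Icc 1 (m * max 1 ρ), 0 ≤ q i)
    (M : ℝ) (hM : 0 ≤ M)
    (hsum : ∑ i ∈ Finset.Icc 1 (m * max 1 ρ), q i = M) :
    M ^ 2 / (2 * m) ≤
      ∑ d ∈ Finset.Icc 0 ρ, ∑ i ∈ Finset.Icc 1 (m * max 1 ρ - d), q i * q (i + d) :=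
  stmt_2_general ρ m q hq M hsum
end
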